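/- If N is a b-wMRH number with k base-b digits and multiplicative extra term A ≥ 1, then k ≤ A + 4 if b ≥ 6, and k ≤ A + 5 if 2 ≤ b ≤ 5. Consequently, for fixed b and A, the set of b-wMRH numbers with extra term A is finite. -/

import Mathlib

/-- Sum of the base-`b` digits of `N`. -/
def sumDigits (b N : ℕ) : ℕ := (Nat.digits b N).sum

/-- The base-`b` reversal of `N`. -/
def revDigits (b N : ℕ) : ℕ := Nat.ofDigits b (Nat.digits b N).reverse

/-- `N` is a `b`-wMRH number with multiplicative extra term `A`. -/
def IsWMRHWith (b N A : ℕ) : Prop :=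
  N = (A + sumDigits b N) * revDigits b (A + sumDigits b N)

/-!
Write `k` for the number of base-`b` digits of `N` and `M = A + s_b(N)`. Since `M^R < b·M`,
`b^(k-1) ≤ N = M·M^R < b·M² ≤ b·(A + (b-1)k)²`. If `k ≥ A + c` then `A + (b-1)k ≤ bk - c`,
and `(bk - c)²` is eventually smaller than `b^(k-2)`: once this holds for some `k` with
`bk - c ≥ 2b + 1`, it propagates to `k + 1` because `(v + b)² ≤ b·v²` for `v ≥ 2b + 1`.
For `c = 5`, `b ≥ 6` it already holds at `k = 6`; for `c = 6` at `k = 7` when `3 ≤ b ≤ 5`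
and at `k = 10` when `b = 2`. The remaining binary cases `k ∈ {7, 8, 9}` are settled by
computing `M·M^R` for `M ≤ 12`.
-/

lemma sumDigits_le_mul_length {b : ℕ} (hb : 1 < b) (N : ℕ) :
    sumDigits b N ≤ (b - 1) * (Nat.digits b N).length := by
  simpa [sumDigits, mul_comm] using
    List.sum_le_card_nsmul (Nat.digits b N) (b - 1)
      fun d hd => Nat.le_sub_one_of_lt (Nat.digits_lt_base hb hd)

lemma revDigits_lt_base_mul {b m : ℕ} (hb : 1 < b) (hm : m ≠ 0) : revDigits b m < b * m :=
  calc revDigits b m < b ^ (Nat.digits b m).reverse.length :=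
        Nat.ofDigits_lt_base_pow_length hb
          fun d hd => Nat.digits_lt_base hb (List.mem_reverse.mp hd)
    _ = b ^ (Nat.digits b m).length := by rw [List.length_reverse]
    _ ≤ b * m := Nat.base_pow_length_digits_le b m hb hm

lemma sq_add_le_mul_sq {b v : ℕ} (hb : 2 ≤ b) (hv : 2 * b + 1 ≤ v) :
    (v + b) ^ 2 ≤ b * v ^ 2 := by
  nlinarith [Nat.mul_le_mul hb (Nat.mul_le_mul hv hv), Nat.mul_le_mul hv hv, Nat.mul_le_mul hb hv]

lemma sq_add_mul_lt_pow {b u n : ℕ} (hb : 2 ≤ b) (hu : 2 * b + 1 ≤ u) (h : u ^ 2 < b ^ n)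
    (i : ℕ) : (u + b * i) ^ 2 < b ^ (n + i) := by
  induction i with
  | zero => simpa using h
  | succ i ih =>
    calc (u + b * (i + 1)) ^ 2 = (u + b * i + b) ^ 2 := by ring
      _ ≤ b * (u + b * i) ^ 2 := sq_add_le_mul_sq hb (hu.trans (Nat.le_add_right u _))
      _ < b * b ^ (n + i) := by gcongr
      _ = b ^ (n + (i + 1)) := by ring

-- `(m + 5) / 2 + 1` is the least `k` with `m ≤ 2 k - 6`.
lemma mul_revDigits_two_lt : ∀ m ≤ 12, m * revDigits 2 m < 2 ^ ((m + 5) / 2) := by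
  decide

namespace IsWMRHWith

variable {b N A : ℕ}

lemma lt_base_mul_sq (hb : 1 < b) (hN : N ≠ 0) (h : IsWMRHWith b N A) :
    N < b * (A + (b - 1) * (Nat.digits b N).length) ^ 2 := by
  set M := A + sumDigits b N
  have hNM : N = M * revDigits b M := h
  have hM : 0 < M := Nat.pos_of_ne_zero fun hM => hN (by rw [hNM, hM, zero_mul])
  calc N = M * revDigits b M := hNM
    _ < M * (b * M) := by gcongr; exact revDigits_lt_base_mul hb hM.ne'
    _ = b * M ^ 2 := by ring
    _ ≤ b * (A + (b - 1) * (Nat.digits b N).length) ^ 2 := by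
      gcongr; exact Nat.add_le_add_left (sumDigits_le_mul_length hb N) A

lemma length_lt_of_sq_lt (hb : 2 ≤ b) (h : IsWMRHWith b N A) {u c n : ℕ}
    (hu : 2 * b + 1 ≤ u) (hun : u ^ 2 < b ^ n) (hc : u + c = b * (n + 2))
    (hk : n + 2 ≤ (Nat.digits b N).length) : (Nat.digits b N).length < A + c := by
  set k := (Nat.digits b N).length
  by_contra! hAk
  obtain ⟨i, hi⟩ := Nat.exists_eq_add_of_le hk
  have hN : N ≠ 0 := by rintro rfl; simp [k] at hk
  have hM : A + (b - 1) * k ≤ u + b * i := by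
    have hbk : b * k = b * (n + 2) + b * i := by rw [hi, mul_add]
    have : (b - 1) * k + k = b * k := by
      rw [Nat.sub_one_mul, Nat.sub_add_cancel (Nat.le_mul_of_pos_left k (by omega))]
    omega
  have : b ^ k < b ^ k :=
    calc b ^ k ≤ b * N := Nat.base_pow_length_digits_le b N hb hN
      _ < b * (b * (A + (b - 1) * k) ^ 2) := by gcongr; exact h.lt_base_mul_sq hb hN
      _ ≤ b * (b * (u + b * i) ^ 2) := by gcongr
      _ < b * (b * b ^ (n + i)) := by gcongr; exact sq_add_mul_lt_pow hb hu hun i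
      _ = b ^ k := by rw [hi]; ring
  exact lt_irrefl _ this

lemma length_le_add_four (hb : 6 ≤ b) (hA : 1 ≤ A) (h : IsWMRHWith b N A) :
    (Nat.digits b N).length ≤ A + 4 := by
  rcases lt_or_ge (Nat.digits b N).length 6 with hk | hk
  · omega
  · have hbase : (6 * b - 5) ^ 2 < b ^ 4 := by
      have : 6 * b ≤ b ^ 2 := by rw [sq]; exact Nat.mul_le_mul_right b hb
      calc (6 * b - 5) ^ 2 < (b ^ 2) ^ 2 := by gcongr; omega
        _ = b ^ 4 := by ring
    have := h.length_lt_of_sq_lt (c := 5) (by omega) (by omega) hbase (by omega) hk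
    omega

lemma length_le_add_five_of_base_two (hA : 1 ≤ A) (h : IsWMRHWith 2 N A) :
    (Nat.digits 2 N).length ≤ A + 5 := by
  set k := (Nat.digits 2 N).length
  rcases le_or_gt 10 k with hk | hk
  · have := h.length_lt_of_sq_lt le_rfl (u := 14) (c := 6) (n := 8)
      (by norm_num) (by norm_num) (by norm_num) hk
    omega
  by_contra! hAk
  set M := A + sumDigits 2 N
  have hs := sumDigits_le_mul_length one_lt_two N
  have hM : M ≤ 12 := by omega
  have hN : N ≠ 0 := by rintro rfl; simp [k] at hAk
  have : 2 ^ k < 2 ^ k :=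
    calc 2 ^ k ≤ 2 * N := Nat.base_pow_length_digits_le 2 N one_lt_two hN
      _ = 2 * (M * revDigits 2 M) := by rw [← h]
      _ < 2 * 2 ^ ((M + 5) / 2) := by gcongr; exact mul_revDigits_two_lt M hM
      _ ≤ 2 ^ k := by
        rw [← pow_succ']
        exact Nat.pow_le_pow_right two_pos (by omega)
  exact lt_irrefl _ this

lemma length_le_add_five (hb : 2 ≤ b) (hA : 1 ≤ A) (h : IsWMRHWith b N A) :
    (Nat.digits b N).length ≤ A + 5 := by
  rcases (by omega : b = 2 ∨ 3 ≤ b ∧ b ≤ 5 ∨ 6 ≤ b) with rfl | ⟨hb3, hb5⟩ | hb6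
  · exact h.length_le_add_five_of_base_two hA
  · rcases lt_or_ge (Nat.digits b N).length 7 with hk | hk
    · omega
    · have hbase : (7 * b - 6) ^ 2 < b ^ 5 := by interval_cases b <;> norm_num
      have := h.length_lt_of_sq_lt hb (c := 6) (by omega) hbase (by omega) hk
      omega
  · have := h.length_le_add_four hb6 hA
    omega

end IsWMRHWith

theorem wMRH_digit_bound (b : ℕ) (hb : 2 ≤ b) :
    (∀ N A : ℕ, 1 ≤ A → IsWMRHWith b N A →
      ((6 ≤ b → (Nat.digits b N).length ≤ A + 4) ∧
       (b ≤ 5 → (Nat.digits b N).length ≤ A + 5))) ∧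
    ∀ A : ℕ, 1 ≤ A → {N : ℕ | IsWMRHWith b N A}.Finite := by
  refine ⟨fun N A hA h => ⟨fun hb6 => h.length_le_add_four hb6 hA,
    fun _ => h.length_le_add_five hb hA⟩, fun A hA => ?_⟩
  refine (Set.finite_Iio (b ^ (A + 5))).subset fun N (h : IsWMRHWith b N A) => ?_
  calc N < b ^ (Nat.digits b N).length := Nat.lt_base_pow_length_digits hb
    _ ≤ b ^ (A + 5) := Nat.pow_le_pow_right (by omega) (h.length_le_add_five hb hA)
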